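/- With the modification construction as above, for any x₀ ∈ V_o and r > 0, μ_o(B_{d_{σ_o}}(x₀, r)) ≤ μ(B_{d_σ}(x₀, r)) ≤ 3·μ_o(B_{d_{σ_o}}(x₀, r)), where balls are closed balls in the respective adapted path metrics. -/

import Mathlib

/-- The sum of `σ`-weights along consecutive pairs of a list of vertices. -/
def chainSum {V : Type*} (σ : V → V → ℝ) : List V → ℝ
  | a :: b :: l => σ a b + chainSum σ (b :: l)
  | _ => 0

/-- `l` is a path from `x` to `y` in the graph whose edges are the pairs of
positive weight. -/
def isPath {V : Type*} (w : V → V → ℝ) (x y : V) (l : List V) : Prop :=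
  l.head? = some x ∧ l.getLast? = some y ∧ l.Chain' (fun a b => 0 < w a b)

/-- The adapted path (pseudo-)metric: the infimum of `σ`-lengths of paths from
`x` to `y`. -/
noncomputable def dPath {V : Type*} (w σ : V → V → ℝ) (x y : V) : ℝ :=
  sInf {s : ℝ | ∃ l : List V, isPath w x y l ∧ s = chainSum σ l}

open Classical in
/-- The new vertices of the modification: `(a, b, i)` with `(a,b)` an oriented
edge (i.e. `(a,b) ∈ Ep` and `w_o a b > 0`) and `1 ≤ i ≤ 𝔫(a,b) - 1`. -/
def NewV {Vo : Type*} (wo : Vo → Vo → ℝ) (n : Vo → Vo → ℕ) (Ep : Set (Vo × Vo)) : Type _ :=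
  {p : Vo × Vo × ℕ //
    (p.1, p.2.1) ∈ Ep ∧ 0 < wo p.1 p.2.1 ∧ 1 ≤ p.2.2 ∧ p.2.2 ≤ n p.1 p.2.1 - 1}

/-- The vertex set of the modified graph: old vertices together with the new
subdivision vertices. -/
abbrev MV {Vo : Type*} (wo : Vo → Vo → ℝ) (n : Vo → Vo → ℕ) (Ep : Set (Vo × Vo)) : Type _ :=
  Vo ⊕ NewV wo n Ep

open Classical in
/-- The edge weights of the modified graph: each oriented edge `e = (a,b)` is
subdivided into the path `a = x₀ᵉ ~ x₁ᵉ ~ ⋯ ~ x_{𝔫(e)}ᵉ = b`, and all the new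
edges along `e` carry the weight `𝔫(e)·w_o(e)`. -/
noncomputable def mw {Vo : Type*} (wo : Vo → Vo → ℝ) (n : Vo → Vo → ℕ) (Ep : Set (Vo × Vo)) :
    MV wo n Ep → MV wo n Ep → ℝ
  | Sum.inl _, Sum.inl _ => 0
  | Sum.inl x, Sum.inr p =>
      if (x = p.val.1 ∧ p.val.2.2 = 1) ∨
          (x = p.val.2.1 ∧ p.val.2.2 = n p.val.1 p.val.2.1 - 1)
      then (n p.val.1 p.val.2.1 : ℝ) * wo p.val.1 p.val.2.1 else 0
  | Sum.inr p, Sum.inl x =>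
      if (x = p.val.1 ∧ p.val.2.2 = 1) ∨
          (x = p.val.2.1 ∧ p.val.2.2 = n p.val.1 p.val.2.1 - 1)
      then (n p.val.1 p.val.2.1 : ℝ) * wo p.val.1 p.val.2.1 else 0
  | Sum.inr p, Sum.inr q =>
      if p.val.1 = q.val.1 ∧ p.val.2.1 = q.val.2.1 ∧
          (p.val.2.2 = q.val.2.2 + 1 ∨ q.val.2.2 = p.val.2.2 + 1)
      then (n p.val.1 p.val.2.1 : ℝ) * wo p.val.1 p.val.2.1 else 0

open Classical in
/-- The adapted weight of the modified graph: each new edge along the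
subdivision of `e` has weight `σ_o(e)/𝔫(e)`. -/
noncomputable def mσ {Vo : Type*} (wo σo : Vo → Vo → ℝ) (n : Vo → Vo → ℕ)
    (Ep : Set (Vo × Vo)) : MV wo n Ep → MV wo n Ep → ℝ
  | Sum.inl _, Sum.inl _ => 0
  | Sum.inl x, Sum.inr p =>
      if (x = p.val.1 ∧ p.val.2.2 = 1) ∨
          (x = p.val.2.1 ∧ p.val.2.2 = n p.val.1 p.val.2.1 - 1)
      then σo p.val.1 p.val.2.1 / (n p.val.1 p.val.2.1 : ℝ) else 0
  | Sum.inr p, Sum.inl x =>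
      if (x = p.val.1 ∧ p.val.2.2 = 1) ∨
          (x = p.val.2.1 ∧ p.val.2.2 = n p.val.1 p.val.2.1 - 1)
      then σo p.val.1 p.val.2.1 / (n p.val.1 p.val.2.1 : ℝ) else 0
  | Sum.inr p, Sum.inr q =>
      if p.val.1 = q.val.1 ∧ p.val.2.1 = q.val.2.1 ∧
          (p.val.2.2 = q.val.2.2 + 1 ∨ q.val.2.2 = p.val.2.2 + 1)
      then σo p.val.1 p.val.2.1 / (n p.val.1 p.val.2.1 : ℝ) else 0

/-- The vertex measure of the modified graph: old vertices keep their measure,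
and each new vertex on the subdivision of `e` has measure `2·w_o(e)·σ_o(e)²/𝔫(e)`. -/
noncomputable def mμ {Vo : Type*} (wo σo : Vo → Vo → ℝ) (μo : Vo → ℝ)
    (n : Vo → Vo → ℕ) (Ep : Set (Vo × Vo)) : MV wo n Ep → ℝ
  | Sum.inl x => μo x
  | Sum.inr p => 2 * wo p.val.1 p.val.2.1 * σo p.val.1 p.val.2.1 ^ 2 / (n p.val.1 p.val.2.1 : ℝ)

/-!
Subdividing each edge `e` into `𝔫(e)` edges of `σ`-length `σ_o(e)/𝔫(e)` does not change the
distance between old vertices: old paths lift edge by edge, and conversely no path of the new graph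
is shorter, because the potential equal to `d_{σ_o}(x₀, ·)` on old vertices and to the shorter way
round through the two ends of the edge on a subdivision vertex grows by at most `σ` along every new
edge. The same potential shows that each subdivision vertex of a ball lies on an edge with an end
`u` in the old ball. By adaptedness the subdivision vertices on the edges at `u` weigh at most
`∑_v 2 w_o(u,v) σ_o(u,v)² ≤ 2 μ_o(u)`, whence the factor `3`.
-/

open scoped ENNReal

section Paths

variable {V : Type*} {w σ : V → V → ℝ}

lemma isPath_iff {x y : V} {l : List V} :
    isPath w x y l ↔ l.head? = some x ∧ l.getLast? = some y ∧ l.IsChain (fun a b => 0 < w a b) :=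
  Iff.rfl

lemma not_isPath_nil (x y : V) : ¬ isPath w x y [] := by
  simp [isPath]

lemma isPath_singleton_iff {x y a : V} : isPath w x y [a] ↔ a = x ∧ a = y := by
  simp [isPath_iff, eq_comm]

lemma isPath_cons_cons_iff {x y a b : V} {l : List V} :
    isPath w x y (a :: b :: l) ↔ a = x ∧ 0 < w a b ∧ isPath w b y (b :: l) := by
  simp only [isPath_iff, List.head?_cons, Option.some.injEq, List.getLast?_cons_cons,
    List.isChain_cons_cons]
  tauto

lemma isPath.induction_on {y : V} {P : V → List V → Prop} (single : P y [y])
    (cons : ∀ x b l, 0 < w x b → isPath w b y (b :: l) → P b (b :: l) → P x (x :: b :: l)) :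
    ∀ {x : V} {l : List V}, isPath w x y l → P x l
  | _, [], hl => absurd hl (not_isPath_nil _ _)
  | _, [_], hl => by
    obtain ⟨rfl, rfl⟩ := isPath_singleton_iff.mp hl
    exact single
  | _, _ :: _ :: _, hl => by
    obtain ⟨rfl, hab, hl⟩ := isPath_cons_cons_iff.mp hl
    exact cons _ _ _ hab hl (isPath.induction_on single cons hl)

lemma chainSum_nonneg (hσ : ∀ a b, 0 < w a b → 0 ≤ σ a b) {x y : V} {l : List V}
    (hl : isPath w x y l) : 0 ≤ chainSum σ l :=
  hl.induction_on (P := fun _ l => 0 ≤ chainSum σ l) le_rfl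
    fun a b _ hab _ ih => add_nonneg (hσ a b hab) ih

variable (w σ) in
def ReachableWithin (c : ℝ) (x y : V) : Prop :=
  ∃ l, isPath w x y l ∧ chainSum σ l ≤ c

namespace ReachableWithin

lemma of_isPath {x y : V} {l : List V} (hl : isPath w x y l) :
    ReachableWithin w σ (chainSum σ l) x y :=
  ⟨l, hl, le_rfl⟩

lemma exists_isPath {c : ℝ} {x y : V} (h : ReachableWithin w σ c x y) : ∃ l, isPath w x y l :=
  let ⟨l, hl, _⟩ := h
  ⟨l, hl⟩

lemma refl (x : V) : ReachableWithin w σ 0 x x :=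
  ⟨[x], isPath_singleton_iff.mpr ⟨rfl, rfl⟩, le_rfl⟩

lemma mono {c c' : ℝ} {x y : V} (h : ReachableWithin w σ c x y) (hc : c ≤ c') :
    ReachableWithin w σ c' x y :=
  let ⟨l, hl, hlc⟩ := h
  ⟨l, hl, hlc.trans hc⟩

lemma cons {c : ℝ} {x y z : V} (hxy : 0 < w x y) (h : ReachableWithin w σ c y z) :
    ReachableWithin w σ (σ x y + c) x z := by
  obtain ⟨_ | ⟨a, l⟩, hl, hlc⟩ := h
  · exact absurd hl (not_isPath_nil _ _)
  obtain rfl : a = y := by simpa using hl.1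
  exact ⟨x :: a :: l, isPath_cons_cons_iff.mpr ⟨rfl, hxy, hl⟩, add_le_add_right hlc _⟩

lemma single {x y : V} (h : 0 < w x y) : ReachableWithin w σ (σ x y) x y := by
  simpa using (refl y).cons h

lemma trans {c c' : ℝ} {x y z : V} (h : ReachableWithin w σ c x y)
    (h' : ReachableWithin w σ c' y z) : ReachableWithin w σ (c + c') x z := by
  obtain ⟨l, hl, hlc⟩ := h
  refine mono ?_ (add_le_add_left hlc c')
  exact hl.induction_on (P := fun x l => ReachableWithin w σ (chainSum σ l + c') x z)
    (by simpa [chainSum] using h') fun a b _ hab _ ih => by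
      simpa [chainSum, add_assoc] using ih.cons hab

lemma of_isPath_map {V' : Type*} {w' σ' : V' → V' → ℝ} (F : V → V')
    (hF : ∀ a b, 0 < w a b → ReachableWithin w' σ' (σ a b) (F a) (F b)) {x y : V} {l : List V}
    (hl : isPath w x y l) : ReachableWithin w' σ' (chainSum σ l) (F x) (F y) :=
  hl.induction_on (P := fun x l => ReachableWithin w' σ' (chainSum σ l) (F x) (F y)) (refl _)
    fun a b _ hab _ ih => (hF a b hab).trans ih

end ReachableWithin

lemma dPath_le_of_reachableWithin (hσ : ∀ a b, 0 < w a b → 0 ≤ σ a b) {c : ℝ} {x y : V}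
    (h : ReachableWithin w σ c x y) : dPath w σ x y ≤ c := by
  obtain ⟨l, hl, hlc⟩ := h
  unfold dPath
  have hbdd : BddBelow {s | ∃ l, isPath w x y l ∧ s = chainSum σ l} := by
    refine ⟨0, ?_⟩
    rintro s ⟨m, hm, rfl⟩
    exact chainSum_nonneg hσ hm
  exact (csInf_le hbdd ⟨l, hl, rfl⟩).trans hlc

lemma le_dPath {c : ℝ} {x y : V} (hne : ∃ l, isPath w x y l)
    (h : ∀ l, isPath w x y l → c ≤ chainSum σ l) : c ≤ dPath w σ x y := by
  obtain ⟨l, hl⟩ := hne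
  unfold dPath
  refine le_csInf ⟨_, l, hl, rfl⟩ ?_
  rintro s ⟨m, hm, rfl⟩
  exact h m hm

lemma dPath_le_dPath_add (hσ : ∀ a b, 0 < w a b → 0 ≤ σ a b) {x a b : V}
    (hne : ∃ l, isPath w x a l) (hab : 0 < w a b) : dPath w σ x b ≤ dPath w σ x a + σ a b := by
  suffices dPath w σ x b - σ a b ≤ dPath w σ x a by linarith
  refine le_dPath hne fun l hl => ?_
  have := dPath_le_of_reachableWithin hσ ((ReachableWithin.of_isPath hl).trans (.single hab))
  linarith

lemma sub_le_dPath {f : V → ℝ} (hf : ∀ a b, 0 < w a b → f b ≤ f a + σ a b) {x y : V}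
    (hne : ∃ l, isPath w x y l) : f y - f x ≤ dPath w σ x y := by
  refine le_dPath hne fun l hl => hl.induction_on (P := fun x l => f y - f x ≤ chainSum σ l)
    (by simp [chainSum]) fun a b l hab _ ih => ?_
  have := hf a b hab
  rw [chainSum]
  linarith

end Paths

lemma ENNReal.tsum_ite_lt_div_le (c : ℝ≥0∞) (N : ℕ) :
    ∑' i : ℕ, (if i < N then c / N else 0) ≤ c := by
  rw [tsum_eq_sum (s := Finset.range N) fun i hi => if_neg (by simpa using hi)]
  calc ∑ i ∈ Finset.range N, (if i < N then c / N else 0)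
      = ∑ _i ∈ Finset.range N, c / N :=
        Finset.sum_congr rfl fun i hi => if_pos (by simpa using hi)
    _ = N * (c / N) := by simp
    _ ≤ c := ENNReal.mul_div_le

lemma ENNReal.tsum_subtype_sum {α β : Type*} (p : α ⊕ β → Prop) (f : α ⊕ β → ℝ≥0∞) :
    ∑' c : {c // p c}, f c =
      ∑' a : {a // p (.inl a)}, f (.inl a) + ∑' b : {b // p (.inr b)}, f (.inr b) := by
  rw [← Equiv.subtypeSum.symm.tsum_eq, ENNReal.summable.tsum_sum ENNReal.summable]
  rfl

lemma tsum_eq_toReal_tsum_ofReal {α : Type*} {f : α → ℝ} (hf : ∀ a, 0 ≤ f a) :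
    ∑' a, f a = (∑' a, ENNReal.ofReal (f a)).toReal := by
  rw [ENNReal.tsum_toReal_eq fun _ => ENNReal.ofReal_ne_top]
  exact tsum_congr fun a => (ENNReal.toReal_ofReal (hf a)).symm

lemma tsum_le_and_le_mul_of_ofReal {α β : Type*} {f : α → ℝ} {g : β → ℝ} (hf : ∀ a, 0 ≤ f a)
    (hg : ∀ b, 0 ≤ g b) {k : ℝ} (hk : 0 ≤ k)
    (hfg : ∑' a, ENNReal.ofReal (f a) ≤ ∑' b, ENNReal.ofReal (g b))
    (hgf : ∑' b, ENNReal.ofReal (g b) ≤ ENNReal.ofReal k * ∑' a, ENNReal.ofReal (f a)) :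
    ∑' a, f a ≤ ∑' b, g b ∧ ∑' b, g b ≤ k * ∑' a, f a := by
  rw [tsum_eq_toReal_tsum_ofReal hf, tsum_eq_toReal_tsum_ofReal hg]
  by_cases hA : ∑' a, ENNReal.ofReal (f a) = ∞
  · simp [hA, top_le_iff.mp (hA ▸ hfg)]
  have hkA : ENNReal.ofReal k * ∑' a, ENNReal.ofReal (f a) ≠ ∞ :=
    ENNReal.mul_ne_top ENNReal.ofReal_ne_top hA
  refine ⟨ENNReal.toReal_mono (ne_top_of_le_ne_top hkA hgf) hfg, ?_⟩
  simpa [ENNReal.toReal_mul, hk] using ENNReal.toReal_mono hkA hgf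

section Subdivision

variable {Vo : Type*} {wo σo : Vo → Vo → ℝ} {n : Vo → Vo → ℕ} {Ep : Set (Vo × Vo)}

lemma NewV.two_le (q : NewV wo n Ep) : 2 ≤ n q.val.1 q.val.2.1 := by
  have := q.prop.2.2
  omega

lemma NewV.cast_n_pos (q : NewV wo n Ep) : (0 : ℝ) < n q.val.1 q.val.2.1 := by
  have := q.two_le
  positivity

lemma mσ_nonneg (hσo : ∀ x y, 0 < wo x y → 0 ≤ σo x y) (z z' : MV wo n Ep) :
    0 ≤ mσ wo σo n Ep z z' := by
  have hs : ∀ q : NewV wo n Ep, 0 ≤ σo q.val.1 q.val.2.1 / n q.val.1 q.val.2.1 :=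
    fun q => div_nonneg (hσo _ _ q.prop.2.1) (Nat.cast_nonneg _)
  rcases z with x | p <;> rcases z' with y | q <;> simp only [mσ] <;>
    (try split_ifs) <;> first | exact le_rfl | exact hs _

lemma reachableWithin_inl_inr {x : Vo} {q : NewV wo n Ep}
    (h : (x = q.val.1 ∧ q.val.2.2 = 1) ∨ (x = q.val.2.1 ∧ q.val.2.2 = n q.val.1 q.val.2.1 - 1)) :
    ReachableWithin (mw wo n Ep) (mσ wo σo n Ep) (σo q.val.1 q.val.2.1 / n q.val.1 q.val.2.1)
        (.inl x) (.inr q) ∧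
      ReachableWithin (mw wo n Ep) (mσ wo σo n Ep) (σo q.val.1 q.val.2.1 / n q.val.1 q.val.2.1)
        (.inr q) (.inl x) := by
  have hpos := mul_pos q.cast_n_pos q.prop.2.1
  constructor <;> convert ReachableWithin.single ?_ using 1 <;>
    simp [mw, mσ, h, hpos]

lemma reachableWithin_inr_inr {p q : NewV wo n Ep} (ha : p.val.1 = q.val.1)
    (hb : p.val.2.1 = q.val.2.1) (hi : q.val.2.2 = p.val.2.2 + 1) :
    ReachableWithin (mw wo n Ep) (mσ wo σo n Ep) (σo p.val.1 p.val.2.1 / n p.val.1 p.val.2.1)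
        (.inr p) (.inr q) ∧
      ReachableWithin (mw wo n Ep) (mσ wo σo n Ep) (σo p.val.1 p.val.2.1 / n p.val.1 p.val.2.1)
        (.inr q) (.inr p) := by
  have hpos := mul_pos q.cast_n_pos q.prop.2.1
  constructor <;> convert ReachableWithin.single ?_ using 1 <;>
    simp [mw, mσ, ha, hb, hi, hpos]

lemma reachableWithin_inl_subdivision {a b : Vo} (hE : (a, b) ∈ Ep) (hw : 0 < wo a b) {i : ℕ}
    (h1 : 1 ≤ i) (h2 : i ≤ n a b - 1) :
    ReachableWithin (mw wo n Ep) (mσ wo σo n Ep) (i * (σo a b / n a b))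
        (.inl a) (.inr ⟨(a, b, i), hE, hw, h1, h2⟩) ∧
      ReachableWithin (mw wo n Ep) (mσ wo σo n Ep) (i * (σo a b / n a b))
        (.inr ⟨(a, b, i), hE, hw, h1, h2⟩) (.inl a) := by
  induction i, h1 using Nat.le_induction with
  | base =>
    simpa using reachableWithin_inl_inr (σo := σo) (q := ⟨(a, b, 1), hE, hw, le_rfl, h2⟩)
      (Or.inl ⟨rfl, rfl⟩)
  | succ i hi ih =>
    have hi2 : i ≤ n a b - 1 := by omega
    obtain ⟨hto, hfrom⟩ := ih hi2
    obtain ⟨hstep, hback⟩ := reachableWithin_inr_inr (σo := σo)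
      (p := ⟨(a, b, i), hE, hw, hi, hi2⟩)
      (q := ⟨(a, b, i + 1), hE, hw, Nat.le_add_left 1 i, h2⟩) rfl rfl rfl
    constructor
    · convert hto.trans hstep using 1
      push_cast
      ring
    · convert hback.trans hfrom using 1
      push_cast
      ring

lemma reachableWithin_inl_inl (hwo_symm : ∀ x y, wo x y = wo y x)
    (hσo_symm : ∀ x y, σo x y = σo y x) (hn2 : ∀ x y, 0 < wo x y → 2 ≤ n x y)
    (hEp_orient : ∀ x y, 0 < wo x y → Xor' ((x, y) ∈ Ep) ((y, x) ∈ Ep)) {x y : Vo}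
    (h : 0 < wo x y) :
    ReachableWithin (mw wo n Ep) (mσ wo σo n Ep) (σo x y) (.inl x) (.inl y) := by
  have subdivision_length : ∀ a b, 0 < wo a b →
      ((n a b - 1 : ℕ) : ℝ) * (σo a b / n a b) + σo a b / n a b = σo a b := fun a b hab => by
    have := hn2 a b hab
    have : (0 : ℝ) < n a b := by positivity
    rw [Nat.cast_sub (by omega)]
    field_simp
    ring
  rcases hEp_orient x y h with ⟨hE, -⟩ | ⟨hE, -⟩
  · have h1 : 1 ≤ n x y - 1 := by have := hn2 x y h; omega
    have hlast := (reachableWithin_inl_inr (σo := σo)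
      (q := ⟨(x, y, n x y - 1), hE, h, h1, le_rfl⟩) (x := y) (Or.inr ⟨rfl, rfl⟩)).2
    simpa [subdivision_length x y h] using
      (reachableWithin_inl_subdivision (σo := σo) hE h h1 le_rfl).1.trans hlast
  · have h' : 0 < wo y x := hwo_symm x y ▸ h
    have h1 : 1 ≤ n y x - 1 := by have := hn2 y x h'; omega
    have hfirst := (reachableWithin_inl_inr (σo := σo)
      (q := ⟨(y, x, n y x - 1), hE, h', h1, le_rfl⟩) (x := x) (Or.inr ⟨rfl, rfl⟩)).1
    dsimp only at hfirst
    convert hfirst.trans (reachableWithin_inl_subdivision (σo := σo) hE h' h1 le_rfl).2 using 1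
    rw [hσo_symm x y]
    linarith [subdivision_length y x h']

lemma reachableWithin_inl_of_isPath (hwo_symm : ∀ x y, wo x y = wo y x)
    (hσo_symm : ∀ x y, σo x y = σo y x) (hn2 : ∀ x y, 0 < wo x y → 2 ≤ n x y)
    (hEp_orient : ∀ x y, 0 < wo x y → Xor' ((x, y) ∈ Ep) ((y, x) ∈ Ep))
    {x y : Vo} {l : List Vo} (hl : isPath wo x y l) :
    ReachableWithin (mw wo n Ep) (mσ wo σo n Ep) (chainSum σo l) (.inl x) (.inl y) :=
  ReachableWithin.of_isPath_map Sum.inl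
    (fun _ _ hab => reachableWithin_inl_inl hwo_symm hσo_symm hn2 hEp_orient hab) hl

end Subdivision

section Distances

variable {Vo : Type*} {wo σo : Vo → Vo → ℝ} {n : Vo → Vo → ℕ} {Ep : Set (Vo × Vo)}

variable (wo σo n Ep) in
/-- A lower bound for the distance from `x` in the subdivided graph: a subdivision vertex can only
be reached through one of the two ends of its edge. -/
noncomputable def subdivPotential (x : Vo) : MV wo n Ep → ℝ
  | .inl y => dPath wo σo x y
  | .inr q =>
    min (dPath wo σo x q.val.1 + q.val.2.2 * (σo q.val.1 q.val.2.1 / n q.val.1 q.val.2.1))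
      (dPath wo σo x q.val.2.1 +
        ((n q.val.1 q.val.2.1 : ℝ) - q.val.2.2) * (σo q.val.1 q.val.2.1 / n q.val.1 q.val.2.1))

lemma dPath_src_le_subdivPotential_add (hwo_symm : ∀ x y, wo x y = wo y x)
    (hσo_symm : ∀ x y, σo x y = σo y x) (hσo : ∀ x y, 0 < wo x y → 0 ≤ σo x y)
    (hconn : ∀ x y : Vo, ∃ l : List Vo, isPath wo x y l) (x : Vo) (q : NewV wo n Ep) :
    dPath wo σo x q.val.1 ≤ subdivPotential wo σo n Ep x (.inr q) +
      q.val.2.2 * (σo q.val.1 q.val.2.1 / n q.val.1 q.val.2.1) := by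
  have hσ := mul_div_cancel₀ (σo q.val.1 q.val.2.1) q.cast_n_pos.ne'
  have hs : 0 ≤ σo q.val.1 q.val.2.1 / n q.val.1 q.val.2.1 :=
    div_nonneg (hσo _ _ q.prop.2.1) q.cast_n_pos.le
  have := dPath_le_dPath_add hσo (hconn x _) (hwo_symm q.val.1 _ ▸ q.prop.2.1)
  rw [hσo_symm] at this
  simp only [subdivPotential, ← min_add_add_right]
  refine le_min ?_ ?_ <;> nlinarith

lemma dPath_tgt_le_subdivPotential_add (hσo : ∀ x y, 0 < wo x y → 0 ≤ σo x y)
    (hconn : ∀ x y : Vo, ∃ l : List Vo, isPath wo x y l) (x : Vo) (q : NewV wo n Ep) :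
    dPath wo σo x q.val.2.1 ≤ subdivPotential wo σo n Ep x (.inr q) +
      ((n q.val.1 q.val.2.1 : ℝ) - q.val.2.2) * (σo q.val.1 q.val.2.1 / n q.val.1 q.val.2.1) := by
  have hσ := mul_div_cancel₀ (σo q.val.1 q.val.2.1) q.cast_n_pos.ne'
  have hs : 0 ≤ σo q.val.1 q.val.2.1 / n q.val.1 q.val.2.1 :=
    div_nonneg (hσo _ _ q.prop.2.1) q.cast_n_pos.le
  have hi : (q.val.2.2 : ℝ) ≤ n q.val.1 q.val.2.1 := by
    have := q.prop.2.2.2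
    exact_mod_cast (by omega : q.val.2.2 ≤ n q.val.1 q.val.2.1)
  have := dPath_le_dPath_add hσo (hconn x _) q.prop.2.1
  simp only [subdivPotential, ← min_add_add_right]
  refine le_min ?_ ?_ <;> nlinarith

lemma subdivPotential_le_add (hwo_symm : ∀ x y, wo x y = wo y x)
    (hσo_symm : ∀ x y, σo x y = σo y x) (hσo : ∀ x y, 0 < wo x y → 0 ≤ σo x y)
    (hconn : ∀ x y : Vo, ∃ l : List Vo, isPath wo x y l) (x : Vo) :
    ∀ z z' : MV wo n Ep, 0 < mw wo n Ep z z' →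
      subdivPotential wo σo n Ep x z' ≤ subdivPotential wo σo n Ep x z + mσ wo σo n Ep z z' := by
  rintro (y | q) (y' | q') h
  · simp [mw] at h
  · have hc : (y = q'.val.1 ∧ q'.val.2.2 = 1) ∨
        (y = q'.val.2.1 ∧ q'.val.2.2 = n q'.val.1 q'.val.2.1 - 1) := by
      by_contra hc
      simp [mw, hc] at h
    obtain ⟨-, -, h1, h2⟩ := q'.prop
    simp only [subdivPotential, mσ, if_pos hc]
    rcases hc with ⟨rfl, hi⟩ | ⟨rfl, hi⟩
    · exact (min_le_left _ _).trans (by simp [hi])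
    · refine (min_le_right _ _).trans (le_of_eq ?_)
      rw [hi, Nat.cast_sub (by omega)]
      ring
  · have hc : (y' = q.val.1 ∧ q.val.2.2 = 1) ∨
        (y' = q.val.2.1 ∧ q.val.2.2 = n q.val.1 q.val.2.1 - 1) := by
      by_contra hc
      simp [mw, hc] at h
    obtain ⟨-, -, h1, h2⟩ := q.prop
    simp only [mσ, if_pos hc]
    rcases hc with ⟨rfl, hi⟩ | ⟨rfl, hi⟩
    · simpa [subdivPotential, hi] using
        dPath_src_le_subdivPotential_add hwo_symm hσo_symm hσo hconn x q
    · refine (dPath_tgt_le_subdivPotential_add hσo hconn x q).trans_eq ?_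
      rw [hi, Nat.cast_sub (by omega)]
      ring
  · obtain ⟨⟨a, b, i⟩, hq⟩ := q
    obtain ⟨⟨a', b', j⟩, hq'⟩ := q'
    have hc : a = a' ∧ b = b' ∧ (i = j + 1 ∨ j = i + 1) := by
      by_contra hc
      simp [mw, hc] at h
    obtain ⟨rfl, rfl, hstep⟩ := hc
    have hs : 0 ≤ σo a b / n a b := div_nonneg (hσo a b hq.2.1) (Nat.cast_nonneg _)
    have hji : (j : ℝ) ≤ i + 1 := by exact_mod_cast (by omega : j ≤ i + 1)
    have hij : (i : ℝ) ≤ j + 1 := by exact_mod_cast (by omega : i ≤ j + 1)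
    simp only [subdivPotential, mσ, true_and, if_pos hstep, ← min_add_add_right]
    exact min_le_min (by nlinarith) (by nlinarith)

lemma dPath_inl_inl (hwo_symm : ∀ x y, wo x y = wo y x) (hσo_symm : ∀ x y, σo x y = σo y x)
    (hσo : ∀ x y, 0 < wo x y → 0 ≤ σo x y) (hn2 : ∀ x y, 0 < wo x y → 2 ≤ n x y)
    (hEp_orient : ∀ x y, 0 < wo x y → Xor' ((x, y) ∈ Ep) ((y, x) ∈ Ep))
    (hconn : ∀ x y : Vo, ∃ l : List Vo, isPath wo x y l) (x y : Vo) :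
    dPath (mw wo n Ep) (mσ wo σo n Ep) (.inl x) (.inl y) = dPath wo σo x y := by
  have lift {l : List Vo} (hl : isPath wo x y l) :=
    reachableWithin_inl_of_isPath (Ep := Ep) hwo_symm hσo_symm hn2 hEp_orient hl
  refine le_antisymm (le_dPath (hconn x y) fun l hl =>
    dPath_le_of_reachableWithin (fun _ _ _ => mσ_nonneg hσo _ _) (lift hl)) ?_
  obtain ⟨l, hl⟩ := hconn x y
  have := sub_le_dPath (subdivPotential_le_add hwo_symm hσo_symm hσo hconn x)
    (lift hl).exists_isPath
  have := dPath_le_of_reachableWithin hσo (.refl x)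
  simp only [subdivPotential] at *
  linarith

lemma min_dPath_le_dPath_inr (hwo_symm : ∀ x y, wo x y = wo y x)
    (hσo_symm : ∀ x y, σo x y = σo y x) (hσo : ∀ x y, 0 < wo x y → 0 ≤ σo x y)
    (hn2 : ∀ x y, 0 < wo x y → 2 ≤ n x y)
    (hEp_orient : ∀ x y, 0 < wo x y → Xor' ((x, y) ∈ Ep) ((y, x) ∈ Ep))
    (hconn : ∀ x y : Vo, ∃ l : List Vo, isPath wo x y l) (x : Vo) (q : NewV wo n Ep) :
    min (dPath wo σo x q.val.1) (dPath wo σo x q.val.2.1) ≤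
      dPath (mw wo n Ep) (mσ wo σo n Ep) (.inl x) (.inr q) := by
  obtain ⟨⟨a, b, i⟩, hq⟩ := q
  obtain ⟨hE, hw, h1, h2⟩ : (a, b) ∈ Ep ∧ 0 < wo a b ∧ 1 ≤ i ∧ i ≤ n a b - 1 := hq
  obtain ⟨l, hl⟩ := hconn x a
  have := sub_le_dPath (subdivPotential_le_add hwo_symm hσo_symm hσo hconn x)
    ((reachableWithin_inl_of_isPath hwo_symm hσo_symm hn2 hEp_orient hl).trans
      (reachableWithin_inl_subdivision hE hw h1 h2).1).exists_isPath
  have := dPath_le_of_reachableWithin hσo (.refl x)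
  have hs : 0 ≤ σo a b / n a b := div_nonneg (hσo a b hw) (Nat.cast_nonneg _)
  have hi : (i : ℝ) ≤ n a b := by exact_mod_cast (by omega : i ≤ n a b)
  have hmin : min (dPath wo σo x a) (dPath wo σo x b) ≤
      min (dPath wo σo x a + i * (σo a b / n a b))
        (dPath wo σo x b + (n a b - i) * (σo a b / n a b)) :=
    min_le_min (le_add_of_nonneg_right (by positivity))
      (le_add_of_nonneg_right (mul_nonneg (sub_nonneg.mpr hi) hs))
  simp only [subdivPotential] at *
  linarith

end Distances

section Measure

variable {Vo : Type*} {wo σo : Vo → Vo → ℝ} {μo : Vo → ℝ} {n : Vo → Vo → ℕ} {Ep : Set (Vo × Vo)}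

lemma mμ_nonneg (hwo_nonneg : ∀ x y, 0 ≤ wo x y) (hμo : ∀ x, 0 ≤ μo x) (z : MV wo n Ep) :
    0 ≤ mμ wo σo μo n Ep z := by
  rcases z with x | q
  · exact hμo x
  · have := hwo_nonneg q.val.1 q.val.2.1
    exact div_nonneg (by positivity) (Nat.cast_nonneg _)

lemma ofReal_mμ_inr (q : NewV wo n Ep) :
    ENNReal.ofReal (mμ wo σo μo n Ep (.inr q)) =
      2 * ENNReal.ofReal (wo q.val.1 q.val.2.1 * σo q.val.1 q.val.2.1 ^ 2) /
        n q.val.1 q.val.2.1 := by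
  rw [mμ, mul_assoc, ENNReal.ofReal_div_of_pos q.cast_n_pos, ENNReal.ofReal_mul zero_le_two]
  simp

lemma NewV.not_reversed (hEp_orient : ∀ x y, 0 < wo x y → Xor' ((x, y) ∈ Ep) ((y, x) ∈ Ep))
    {q q' : NewV wo n Ep} (h1 : q.val.1 = q'.val.2.1) (h2 : q.val.2.1 = q'.val.1) : False := by
  have hE' : (q.val.2.1, q.val.1) ∈ Ep := h1 ▸ h2 ▸ q'.prop.1
  rcases hEp_orient _ _ q.prop.2.1 with ⟨-, h⟩ | ⟨-, h⟩
  exacts [h hE', h q.prop.1]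

lemma tsum_ofReal_mul_sq_le (hwo_nonneg : ∀ x y, 0 ≤ wo x y)
    (hloc : ∀ x, {y | 0 < wo x y}.Finite) (hadapt : ∀ x, ∑' y, wo x y * σo x y ^ 2 ≤ μo x)
    (u : Vo) : ∑' v, ENNReal.ofReal (wo u v * σo u v ^ 2) ≤ ENNReal.ofReal (μo u) := by
  have hsupp : (Function.support fun v => wo u v * σo u v ^ 2).Finite :=
    (hloc u).subset fun v hv => (hwo_nonneg u v).lt_of_ne fun h => hv (by simp [← h])
  rw [← ENNReal.ofReal_tsum_of_nonneg (fun v => mul_nonneg (hwo_nonneg u v) (sq_nonneg _))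
    (summable_of_hasFiniteSupport hsupp)]
  exact ENNReal.ofReal_le_ofReal (hadapt u)

open Classical in
/-- The end of the edge of `q` other than `u`, when `q` subdivides an edge at `u`. -/
noncomputable def NewV.farEnd (u : Vo) (q : NewV wo n Ep) : Vo :=
  if q.val.1 = u then q.val.2.1 else q.val.1

lemma injective_farEnd_index (hEp_orient : ∀ x y, 0 < wo x y → Xor' ((x, y) ∈ Ep) ((y, x) ∈ Ep))
    (u : Vo) : Function.Injective fun q : {q : NewV wo n Ep | q.val.1 = u ∨ q.val.2.1 = u} =>
      (q.val.farEnd u, q.val.val.2.2) := by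
  rintro ⟨q, hq⟩ ⟨q', hq'⟩ h
  simp only [NewV.farEnd, Prod.mk.injEq] at h
  obtain ⟨hv, hi⟩ := h
  refine Subtype.ext (Subtype.ext (Prod.ext ?_ (Prod.ext ?_ hi)))
  all_goals
    split_ifs at hv with h1 h2 h2
    · first | exact h1.trans h2.symm | exact hv
    · exact (NewV.not_reversed hEp_orient (h1.trans (hq'.resolve_left h2).symm) hv).elim
    · exact (NewV.not_reversed hEp_orient hv ((hq.resolve_left h1).trans h2.symm)).elim
    · first | exact hv | exact (hq.resolve_left h1).trans (hq'.resolve_left h2).symm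

lemma tsum_mμ_incident_le (hwo_symm : ∀ x y, wo x y = wo y x) (hwo_nonneg : ∀ x y, 0 ≤ wo x y)
    (hloc : ∀ x, {y | 0 < wo x y}.Finite) (hσo_symm : ∀ x y, σo x y = σo y x)
    (hadapt : ∀ x, ∑' y, wo x y * σo x y ^ 2 ≤ μo x) (hn_symm : ∀ x y, n x y = n y x)
    (hEp_orient : ∀ x y, 0 < wo x y → Xor' ((x, y) ∈ Ep) ((y, x) ∈ Ep)) (u : Vo) :
    ∑' q : {q : NewV wo n Ep | q.val.1 = u ∨ q.val.2.1 = u},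
      ENNReal.ofReal (mμ wo σo μo n Ep (.inr q)) ≤ 2 * ENNReal.ofReal (μo u) := by
  let φ : Vo × ℕ → ℝ≥0∞ := fun p =>
    if p.2 < n u p.1 then 2 * ENNReal.ofReal (wo u p.1 * σo u p.1 ^ 2) / n u p.1 else 0
  have hmass : ∀ q : {q : NewV wo n Ep | q.val.1 = u ∨ q.val.2.1 = u},
      ENNReal.ofReal (mμ wo σo μo n Ep (.inr q)) =
        φ (q.val.farEnd u, q.val.val.2.2) := by
    rintro ⟨q, hq⟩
    have hlt : q.val.2.2 < n q.val.1 q.val.2.1 := by have := q.prop.2.2; omega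
    rw [ofReal_mμ_inr, NewV.farEnd]
    split_ifs with h
    · dsimp only at h ⊢
      simp [φ, ← h, hlt]
    · have hb : q.val.2.1 = u := hq.resolve_left h
      dsimp only
      simp [φ, ← hb, hwo_symm q.val.2.1, hσo_symm q.val.2.1, hn_symm q.val.2.1, hlt]
  calc _ = ∑' q : {q : NewV wo n Ep | q.val.1 = u ∨ q.val.2.1 = u},
        φ (q.val.farEnd u, q.val.val.2.2) := tsum_congr hmass
    _ ≤ ∑' p, φ p :=
        ENNReal.tsum_comp_le_tsum_of_injective (injective_farEnd_index hEp_orient u) φ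
    _ = ∑' v, ∑' i, φ (v, i) := ENNReal.tsum_prod'
    _ ≤ ∑' v, 2 * ENNReal.ofReal (wo u v * σo u v ^ 2) :=
        ENNReal.tsum_le_tsum fun v => ENNReal.tsum_ite_lt_div_le _ (n u v)
    _ = 2 * ∑' v, ENNReal.ofReal (wo u v * σo u v ^ 2) := ENNReal.tsum_mul_left
    _ ≤ 2 * ENNReal.ofReal (μo u) := by
        gcongr
        exact tsum_ofReal_mul_sq_le hwo_nonneg hloc hadapt u

lemma tsum_mμ_inr_ball_le (hwo_symm : ∀ x y, wo x y = wo y x) (hwo_nonneg : ∀ x y, 0 ≤ wo x y)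
    (hloc : ∀ x, {y | 0 < wo x y}.Finite) (hσo_symm : ∀ x y, σo x y = σo y x)
    (hσo : ∀ x y, 0 < wo x y → 0 ≤ σo x y) (hadapt : ∀ x, ∑' y, wo x y * σo x y ^ 2 ≤ μo x)
    (hn_symm : ∀ x y, n x y = n y x) (hn2 : ∀ x y, 0 < wo x y → 2 ≤ n x y)
    (hEp_orient : ∀ x y, 0 < wo x y → Xor' ((x, y) ∈ Ep) ((y, x) ∈ Ep))
    (hconn : ∀ x y : Vo, ∃ l : List Vo, isPath wo x y l) (x₀ : Vo) (r : ℝ) :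
    ∑' q : {q : NewV wo n Ep | dPath (mw wo n Ep) (mσ wo σo n Ep) (.inl x₀) (.inr q) ≤ r},
        ENNReal.ofReal (mμ wo σo μo n Ep (.inr q)) ≤
      2 * ∑' y : {y : Vo // dPath wo σo x₀ y ≤ r}, ENNReal.ofReal (μo y) := by
  have hcover : {q : NewV wo n Ep | dPath (mw wo n Ep) (mσ wo σo n Ep) (.inl x₀) (.inr q) ≤ r} ⊆
      ⋃ u : {y : Vo // dPath wo σo x₀ y ≤ r}, {q | q.val.1 = u ∨ q.val.2.1 = u} := by
    intro q hq
    rcases min_le_iff.mp ((min_dPath_le_dPath_inr hwo_symm hσo_symm hσo hn2 hEp_orient hconn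
      x₀ q).trans hq) with h | h
    exacts [Set.mem_iUnion.mpr ⟨⟨_, h⟩, .inl rfl⟩, Set.mem_iUnion.mpr ⟨⟨_, h⟩, .inr rfl⟩]
  let m : NewV wo n Ep → ℝ≥0∞ := fun q => ENNReal.ofReal (mμ wo σo μo n Ep (.inr q))
  calc _ ≤ _ := ENNReal.tsum_mono_subtype m hcover
    _ ≤ _ := ENNReal.tsum_iUnion_le_tsum m fun u : {y : Vo // dPath wo σo x₀ y ≤ r} =>
          {q : NewV wo n Ep | q.val.1 = u ∨ q.val.2.1 = u}
    _ ≤ ∑' y : {y : Vo // dPath wo σo x₀ y ≤ r}, 2 * ENNReal.ofReal (μo y) :=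
        ENNReal.tsum_le_tsum fun u => tsum_mμ_incident_le hwo_symm hwo_nonneg hloc hσo_symm
          hadapt hn_symm hEp_orient u
    _ = _ := ENNReal.tsum_mul_left

end Measure

theorem stmt_8_general {Vo : Type*} (wo σo : Vo → Vo → ℝ) (μo : Vo → ℝ)
    (n : Vo → Vo → ℕ) (Ep : Set (Vo × Vo))
    (hwo_symm : ∀ x y, wo x y = wo y x) (hwo_nonneg : ∀ x y, 0 ≤ wo x y)
    (hμo_pos : ∀ x, 0 < μo x)
    (hloc : ∀ x, {y | 0 < wo x y}.Finite)
    (hσo_symm : ∀ x y, σo x y = σo y x)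
    (hσo_edge : ∀ x y, 0 < wo x y → 0 < σo x y ∧ σo x y ≤ 1)
    (hadapt : ∀ x, ∑' y, wo x y * σo x y ^ 2 ≤ μo x)
    (hn_symm : ∀ x y, n x y = n y x) (hn2 : ∀ x y, 0 < wo x y → 2 ≤ n x y)
    (hEp_orient : ∀ x y, 0 < wo x y → Xor' ((x, y) ∈ Ep) ((y, x) ∈ Ep))
    (hconn : ∀ x y : Vo, ∃ l : List Vo, isPath wo x y l) :
    ∀ x₀ : Vo, ∀ r : ℝ, 0 < r →
      (∑' y : {y : Vo // dPath wo σo x₀ y ≤ r}, μo y.val) ≤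
        (∑' p : {p : MV wo n Ep // dPath (mw wo n Ep) (mσ wo σo n Ep) (Sum.inl x₀) p ≤ r},
          mμ wo σo μo n Ep p.val) ∧
      (∑' p : {p : MV wo n Ep // dPath (mw wo n Ep) (mσ wo σo n Ep) (Sum.inl x₀) p ≤ r},
          mμ wo σo μo n Ep p.val) ≤
        3 * ∑' y : {y : Vo // dPath wo σo x₀ y ≤ r}, μo y.val := by
  intro x₀ r _
  have hσo : ∀ x y, 0 < wo x y → 0 ≤ σo x y := fun x y h => (hσo_edge x y h).1.le
  have hsplit := ENNReal.tsum_subtype_sum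
    (fun p => dPath (mw wo n Ep) (mσ wo σo n Ep) (.inl x₀) p ≤ r)
    fun p => ENNReal.ofReal (mμ wo σo μo n Ep p)
  have hball : (fun y => dPath (mw wo n Ep) (mσ wo σo n Ep) (.inl x₀) (.inl y) ≤ r) =
      fun y => dPath wo σo x₀ y ≤ r :=
    funext fun y => by rw [dPath_inl_inl hwo_symm hσo_symm hσo hn2 hEp_orient hconn]
  have hnew := tsum_mμ_inr_ball_le (μo := μo) hwo_symm hwo_nonneg hloc hσo_symm hσo hadapt
    hn_symm hn2 hEp_orient hconn x₀ r
  rw [hball] at hsplit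
  refine tsum_le_and_le_mul_of_ofReal (fun y => (hμo_pos _).le)
    (fun p => mμ_nonneg hwo_nonneg (fun x => (hμo_pos x).le) _) zero_le_three ?_ ?_ <;>
    rw [hsplit]
  · exact le_self_add
  · calc _ ≤ _ + 2 * _ := add_le_add_right hnew _
      _ = _ := by
        rw [ENNReal.ofReal_ofNat]
        simp only [mμ]
        ring

/-- Comparison of ball volumes between a weighted graph and its modification:
`μ_o(B_{d_{σ_o}}(x₀, r)) ≤ μ(B_{d_σ}(x₀, r)) ≤ 3·μ_o(B_{d_{σ_o}}(x₀, r))`,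
where balls are closed balls in the respective adapted path metrics. -/
theorem stmt_8 {Vo : Type*} (wo σo : Vo → Vo → ℝ) (μo : Vo → ℝ)
    (n : Vo → Vo → ℕ) (Ep : Set (Vo × Vo))
    (hwo_symm : ∀ x y, wo x y = wo y x) (hwo_nonneg : ∀ x y, 0 ≤ wo x y)
    (hμo_pos : ∀ x, 0 < μo x)
    (hloc : ∀ x, {y | 0 < wo x y}.Finite)
    (hσo_symm : ∀ x y, σo x y = σo y x)
    (hσo_edge : ∀ x y, 0 < wo x y → 0 < σo x y ∧ σo x y ≤ 1)
    (hadapt : ∀ x, ∑' y, wo x y * σo x y ^ 2 ≤ μo x)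
    (hn_symm : ∀ x y, n x y = n y x) (hn2 : ∀ x y, 0 < wo x y → 2 ≤ n x y)
    (hEp_edge : ∀ p ∈ Ep, 0 < wo p.1 p.2)
    (hEp_orient : ∀ x y, 0 < wo x y → Xor' ((x, y) ∈ Ep) ((y, x) ∈ Ep))
    (hconn : ∀ x y : Vo, ∃ l : List Vo, isPath wo x y l) :
    ∀ x₀ : Vo, ∀ r : ℝ, 0 < r →
      (∑' y : {y : Vo // dPath wo σo x₀ y ≤ r}, μo y.val) ≤
        (∑' p : {p : MV wo n Ep // dPath (mw wo n Ep) (mσ wo σo n Ep) (Sum.inl x₀) p ≤ r},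
          mμ wo σo μo n Ep p.val) ∧
      (∑' p : {p : MV wo n Ep // dPath (mw wo n Ep) (mσ wo σo n Ep) (Sum.inl x₀) p ≤ r},
          mμ wo σo μo n Ep p.val) ≤
        3 * ∑' y : {y : Vo // dPath wo σo x₀ y ≤ r}, μo y.val :=
  stmt_8_general wo σo μo n Ep hwo_symm hwo_nonneg hμo_pos hloc hσo_symm hσo_edge hadapt hn_symm hn2
    hEp_orient hconn
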